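/- Let B_i ∈ K^{m×n_i}, i ∈ [N], be a pairwise (δ,σ)-incoherent family of matrices, σ = (σ_1,…,σ_N), and let x = (x_1,…,x_N) ∈ K^{n_1} × ⋯ × K^{n_N} be (s,σ)-sparse. Then | ‖Σ_{i=1}^N B_i x_i‖² − Σ_{i=1}^N ‖B_i x_i‖² | ≤ δ · Σ_{i≠j} ‖x_i‖‖x_j‖ ≤ δ (s−1) Σ_{i=1}^N ‖x_i‖² = δ(s−1)‖x‖². -/
import Mathlib


/-!
Hierarchical measurement operators and the HiRIP (Theorem 1 of the paper).
`𝕜` plays the role of the field `K ∈ {ℝ, ℂ}`.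
-/

open Finset
open scoped BigOperators

variable {𝕜 : Type*} [RCLike 𝕜]

/-- Squared ℓ²-norm of a vector. -/
def normSq {ι : Type*} [Fintype ι] (v : ι → 𝕜) : ℝ := ∑ j, ‖v j‖ ^ 2

/-- A vector is `k`-sparse if it has at most `k` nonzero entries. -/
def IsSparse {n : ℕ} (k : ℕ) (v : Fin n → 𝕜) : Prop := {j | v j ≠ 0}.ncard ≤ k

/-- `x = (x_1, …, x_N)` is `(s, σ)`-hierarchically sparse: at most `s` blocks are
nonzero and each (nonzero) block `x i` has at most `σ i` nonzero entries. -/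
def IsHiSparse {N : ℕ} {n : Fin N → ℕ} (s : ℕ) (σ : Fin N → ℕ)
    (x : ∀ i, Fin (n i) → 𝕜) : Prop :=
  {i | x i ≠ 0}.ncard ≤ s ∧ ∀ i, IsSparse (σ i) (x i)


/-- The collection `B i ∈ 𝕜^{m × n i}`, `i ∈ [N]`, is pairwise `(δ, σ)`-incoherent:
for all `i ≠ j` and all unit-norm vectors `v, w` with at most `σ i` resp. `σ j`
nonzero entries, `|⟨B i v, B j w⟩| ≤ δ`. -/
def PairwiseIncoherent {N m : ℕ} {n : Fin N → ℕ}
    (B : ∀ i, Matrix (Fin m) (Fin (n i)) 𝕜) (δ : ℝ) (σ : Fin N → ℕ) : Prop :=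
  ∀ i j, i ≠ j → ∀ (v : Fin (n i) → 𝕜) (w : Fin (n j) → 𝕜),
    IsSparse (σ i) v → IsSparse (σ j) w → normSq v = 1 → normSq w = 1 →
    ‖∑ l, (starRingEnd 𝕜) ((B i).mulVec v l) * (B j).mulVec w l‖ ≤ δ

/- Auxiliary lemmas. -/

lemma normSq_nonneg {ι : Type*} [Fintype ι] (v : ι → 𝕜) : 0 ≤ normSq v :=
  Finset.sum_nonneg fun _ _ => sq_nonneg _

lemma normSq_smul {ι : Type*} [Fintype ι] (c : 𝕜) (v : ι → 𝕜) :
    normSq (c • v) = ‖c‖ ^ 2 * normSq v := by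
  simp [normSq, Finset.mul_sum, mul_pow]

lemma normSq_pos {ι : Type*} [Fintype ι] {v : ι → 𝕜} (hv : v ≠ 0) : 0 < normSq v := by
  rcases Function.ne_iff.1 hv with ⟨j, hj⟩
  exact Finset.sum_pos' (fun _ _ => sq_nonneg _)
    ⟨j, Finset.mem_univ j, pow_pos (norm_pos_iff.2 hj) 2⟩

lemma isSparse_smul {n : ℕ} {k : ℕ} {v : Fin n → 𝕜} (c : 𝕜) (h : IsSparse k v) :
    IsSparse k (c • v) := by
  refine le_trans (Set.ncard_le_ncard ?_ (Set.toFinite _)) h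
  intro j hj
  simp only [Set.mem_setOf_eq, Pi.smul_apply, smul_eq_mul, ne_eq, mul_eq_zero] at hj ⊢
  tauto

lemma normSq_eq_re {ι : Type*} [Fintype ι] (u : ι → 𝕜) :
    normSq u = RCLike.re (∑ l, (starRingEnd 𝕜) (u l) * u l) := by
  rw [map_sum]
  simp only [normSq, RCLike.conj_mul, ← RCLike.ofReal_pow, RCLike.ofReal_re]

lemma normSq_sum_decomp {N m : ℕ} (g : Fin N → Fin m → 𝕜) :
    normSq (∑ i, g i) - ∑ i, normSq (g i)
      = RCLike.re (∑ p ∈ Finset.univ.offDiag, ∑ l, (starRingEnd 𝕜) (g p.1 l) * g p.2 l) := by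
  have hexp : ∀ l, (starRingEnd 𝕜) ((∑ i, g i) l) * ((∑ i, g i) l)
      = ∑ i, ∑ j, (starRingEnd 𝕜) (g i l) * g j l := by
    intro l
    rw [Finset.sum_apply, map_sum, Finset.sum_mul_sum]
  have h2 : (∑ l, (starRingEnd 𝕜) ((∑ i, g i) l) * ((∑ i, g i) l))
      = ∑ p ∈ (Finset.univ : Finset (Fin N)) ×ˢ Finset.univ,
          ∑ l, (starRingEnd 𝕜) (g p.1 l) * g p.2 l := by
    rw [Finset.sum_product' (f := fun i j => ∑ l, (starRingEnd 𝕜) (g i l) * g j l)]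
    simp only [hexp]
    exact Finset.sum_comm.trans (Finset.sum_congr rfl fun i _ => Finset.sum_comm)
  have hsplit : ∑ p ∈ (Finset.univ : Finset (Fin N)) ×ˢ Finset.univ,
        ∑ l, (starRingEnd 𝕜) (g p.1 l) * g p.2 l
      = (∑ i, ∑ l, (starRingEnd 𝕜) (g i l) * g i l)
        + ∑ p ∈ Finset.univ.offDiag, ∑ l, (starRingEnd 𝕜) (g p.1 l) * g p.2 l := by
    rw [← Finset.diag_union_offDiag,
      Finset.sum_union (Finset.disjoint_diag_offDiag _), Finset.sum_diag]
  rw [normSq_eq_re (∑ i, g i), h2, hsplit, map_add, map_sum]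
  simp only [← normSq_eq_re]
  ring

lemma offDiag_sum_le {N : ℕ} (a : Fin N → ℝ) (T : Finset (Fin N)) (s : ℕ)
    (hT : T.card ≤ s) (haT : ∀ i ∉ T, a i = 0) :
    ∑ p ∈ Finset.univ.offDiag, a p.1 * a p.2 ≤ ((s : ℝ) - 1) * ∑ i, a i ^ 2 := by
  have hsplit : ∑ p ∈ (Finset.univ : Finset (Fin N)).offDiag, a p.1 * a p.2
      = (∑ i, a i) ^ 2 - ∑ i, a i ^ 2 := by
    have := Finset.sum_union (f := fun p : Fin N × Fin N => a p.1 * a p.2)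
      (Finset.disjoint_diag_offDiag (Finset.univ : Finset (Fin N)))
    rw [Finset.diag_union_offDiag] at this
    have hprod : ∑ p ∈ (Finset.univ : Finset (Fin N)) ×ˢ Finset.univ, a p.1 * a p.2
        = (∑ i, a i) ^ 2 := by
      rw [sq, Finset.sum_mul_sum, ← Finset.sum_product']
    rw [hprod, Finset.sum_diag] at this
    simp only [← sq] at this
    linarith
  rw [hsplit]
  have h1 : (∑ i, a i) ^ 2 ≤ (s : ℝ) * ∑ i, a i ^ 2 := by
    have he : ∑ i, a i = ∑ i ∈ T, a i :=
      (Finset.sum_subset (Finset.subset_univ T) (fun i _ hi => haT i hi)).symm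
    rw [he]
    calc (∑ i ∈ T, a i) ^ 2 ≤ (T.card : ℝ) * ∑ i ∈ T, a i ^ 2 :=
          sq_sum_le_card_mul_sum_sq
      _ ≤ (s : ℝ) * ∑ i ∈ T, a i ^ 2 := by
          apply mul_le_mul_of_nonneg_right (by exact_mod_cast hT)
          positivity
      _ ≤ (s : ℝ) * ∑ i, a i ^ 2 := by
          apply mul_le_mul_of_nonneg_left _ (by positivity)
          exact Finset.sum_le_sum_of_subset_of_nonneg (Finset.subset_univ T)
            (fun i _ _ => sq_nonneg _)
  linarith [Finset.sum_nonneg (fun i (_ : i ∈ Finset.univ) => sq_nonneg (a i))]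

lemma cross_bound {N m : ℕ} {n : Fin N → ℕ}
    (B : ∀ i, Matrix (Fin m) (Fin (n i)) 𝕜) (δ : ℝ) (hδ : 0 ≤ δ) (σ : Fin N → ℕ)
    (hB : PairwiseIncoherent B δ σ)
    (x : ∀ i, Fin (n i) → 𝕜) (hσ : ∀ i, IsSparse (σ i) (x i))
    (i j : Fin N) (hij : i ≠ j) :
    ‖∑ l, (starRingEnd 𝕜) ((B i).mulVec (x i) l) * (B j).mulVec (x j) l‖ ≤
      δ * (Real.sqrt (normSq (x i)) * Real.sqrt (normSq (x j))) := by
  by_cases hxi : x i = 0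
  · simp [hxi, Matrix.mulVec_zero]
    positivity
  by_cases hxj : x j = 0
  · simp [hxj, Matrix.mulVec_zero]
    positivity
  set ai := Real.sqrt (normSq (x i)) with hai
  set aj := Real.sqrt (normSq (x j)) with haj
  have hai0 : 0 < ai := Real.sqrt_pos.2 (normSq_pos hxi)
  have haj0 : 0 < aj := Real.sqrt_pos.2 (normSq_pos hxj)
  have haisq : ai ^ 2 = normSq (x i) := Real.sq_sqrt (normSq_nonneg _)
  have hajsq : aj ^ 2 = normSq (x j) := Real.sq_sqrt (normSq_nonneg _)
  set v : Fin (n i) → 𝕜 := ((ai : 𝕜))⁻¹ • x i with hv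
  set w : Fin (n j) → 𝕜 := ((aj : 𝕜))⁻¹ • x j with hw
  have hv1 : normSq v = 1 := by
    rw [hv, normSq_smul, norm_inv, RCLike.norm_ofReal, abs_of_pos hai0, ← haisq]
    field_simp
  have hw1 : normSq w = 1 := by
    rw [hw, normSq_smul, norm_inv, RCLike.norm_ofReal, abs_of_pos haj0, ← hajsq]
    field_simp
  have key := hB i j hij v w (isSparse_smul _ (hσ i)) (isSparse_smul _ (hσ j)) hv1 hw1
  have hexp : (∑ l, (starRingEnd 𝕜) ((B i).mulVec v l) * (B j).mulVec w l)
      = ((ai : 𝕜))⁻¹ * ((aj : 𝕜))⁻¹ *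
        ∑ l, (starRingEnd 𝕜) ((B i).mulVec (x i) l) * (B j).mulVec (x j) l := by
    rw [hv, hw, Matrix.mulVec_smul, Matrix.mulVec_smul, Finset.mul_sum]
    refine Finset.sum_congr rfl fun l _ => ?_
    simp only [Pi.smul_apply, smul_eq_mul, map_mul, map_inv₀, RCLike.conj_ofReal]
    ring
  rw [hexp, norm_mul, norm_mul, norm_inv, norm_inv, RCLike.norm_ofReal, RCLike.norm_ofReal,
    abs_of_pos hai0, abs_of_pos haj0] at key
  calc ‖∑ l, (starRingEnd 𝕜) ((B i).mulVec (x i) l) * (B j).mulVec (x j) l‖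
      = ai * aj * (ai⁻¹ * (aj⁻¹ * ‖∑ l, (starRingEnd 𝕜) ((B i).mulVec (x i) l) * (B j).mulVec (x j) l‖)) := by
        field_simp
    _ ≤ ai * aj * δ := by
        apply mul_le_mul_of_nonneg_left _ (by positivity)
        calc ai⁻¹ * (aj⁻¹ * _) = ai⁻¹ * aj⁻¹ * _ := by ring
          _ ≤ δ := key
    _ = δ * (ai * aj) := by ring

/-- **Cross-term bound for incoherent families.** If `(B i)` is pairwise
`(δ, σ)`-incoherent and `x` is `(s, σ)`-hierarchically sparse, then
`|‖∑ i, B i x i‖² − ∑ i, ‖B i x i‖²| ≤ δ * ∑_{i ≠ j} ‖x i‖ ‖x j‖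
  ≤ δ (s − 1) ∑ i ‖x i‖² = δ (s − 1) ‖x‖²`. -/
theorem abs_normSq_sum_sub_sum_normSq_le {N m : ℕ} {n : Fin N → ℕ}
    (B : ∀ i, Matrix (Fin m) (Fin (n i)) 𝕜) (δ : ℝ) (hδ : 0 ≤ δ) (σ : Fin N → ℕ)
    (hB : PairwiseIncoherent B δ σ) (s : ℕ)
    (x : ∀ i, Fin (n i) → 𝕜) (hx : IsHiSparse s σ x) :
    |normSq (∑ i, (B i).mulVec (x i)) - ∑ i, normSq ((B i).mulVec (x i))| ≤
        δ * ∑ p ∈ Finset.univ.offDiag,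
          Real.sqrt (normSq (x p.1)) * Real.sqrt (normSq (x p.2)) ∧
      δ * (∑ p ∈ Finset.univ.offDiag,
          Real.sqrt (normSq (x p.1)) * Real.sqrt (normSq (x p.2))) ≤
        δ * ((s : ℝ) - 1) * ∑ i, normSq (x i) := by
  classical
  obtain ⟨hs, hσ⟩ := hx
  constructor
  · rw [normSq_sum_decomp]
    calc |RCLike.re (∑ p ∈ Finset.univ.offDiag,
            ∑ l, (starRingEnd 𝕜) ((B p.1).mulVec (x p.1) l) * (B p.2).mulVec (x p.2) l)|
        ≤ ‖∑ p ∈ Finset.univ.offDiag,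
            ∑ l, (starRingEnd 𝕜) ((B p.1).mulVec (x p.1) l) * (B p.2).mulVec (x p.2) l‖ :=
          RCLike.abs_re_le_norm _
      _ ≤ ∑ p ∈ Finset.univ.offDiag,
            ‖∑ l, (starRingEnd 𝕜) ((B p.1).mulVec (x p.1) l) * (B p.2).mulVec (x p.2) l‖ :=
          norm_sum_le _ _
      _ ≤ ∑ p ∈ Finset.univ.offDiag,
            δ * (Real.sqrt (normSq (x p.1)) * Real.sqrt (normSq (x p.2))) :=
          Finset.sum_le_sum fun p hp =>
            cross_bound B δ hδ σ hB x hσ p.1 p.2 (Finset.mem_offDiag.1 hp).2.2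
      _ = δ * ∑ p ∈ Finset.univ.offDiag,
            Real.sqrt (normSq (x p.1)) * Real.sqrt (normSq (x p.2)) := by
          rw [Finset.mul_sum]
  · set T : Finset (Fin N) := Finset.univ.filter (fun i => x i ≠ 0) with hT
    have hTcard : T.card ≤ s := by
      rw [Set.ncard_eq_toFinset_card', Set.toFinset_setOf] at hs
      exact hs
    have haT : ∀ i ∉ T, Real.sqrt (normSq (x i)) = 0 := by
      intro i hi
      have : x i = 0 := by
        by_contra h
        exact hi (Finset.mem_filter.2 ⟨Finset.mem_univ i, h⟩)
      simp [this, normSq]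
    have hmain := offDiag_sum_le (fun i => Real.sqrt (normSq (x i))) T s hTcard haT
    have hsq : ∀ i, Real.sqrt (normSq (x i)) ^ 2 = normSq (x i) :=
      fun i => Real.sq_sqrt (normSq_nonneg _)
    simp only [hsq] at hmain
    rw [mul_assoc]
    exact mul_le_mul_of_nonneg_left hmain hδ
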